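/- Let X̂ ∈ ℝ^{n×n} be symmetric, let Û ∈ ℝ^{n×r} consist of orthonormal eigenvectors of X̂ for its r largest eigenvalues, and let U ∈ ℝ^{n×r} consist of orthonormal eigenvectors of X₀ for its r largest eigenvalues, written U = Zν with ν ∈ ℝ^{r×r} (so that U has constant rows on each cluster). Let C ∈ ℝ^{n×r}, with rows c_i, minimize ‖Û − M‖_F² over all matrices M with at most r distinct rows (k-means on the rows of Û). Then there exists an r×r orthogonal matrix O such that every node i with ‖c_i − Z_iνO‖ < 1/√(2 m_max) is correctly clustered (i.e. ‖c_i − Z_iνO‖ < ‖c_i − Z_jνO‖ whenever Z_j ≠ Z_i), and the number of nodes i with ‖c_i − Z_iνO‖ ≥ 1/√(2 m_max) is at most 64 m_max ‖X̂ − X₀‖_F². -/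

import Mathlib

/-!
Write `U = Zν`. Orthonormality of `U` forces `ν νᵀ = diag (1 / m_k)`, hence `U Uᵀ = X₀` and the
cluster centres, the rows of `ν O` for any orthogonal `O`, are pairwise orthogonal with squared
norms `1 / m_k`; distinct centres are therefore at distance at least `√(2 / m_max)`.

By Ky Fan's maximum principle `tr (X̂ (ÛÛᵀ - UUᵀ)) ≥ 0`, while
`tr (X₀ (ÛÛᵀ - UUᵀ)) = -‖ÛÛᵀ - UUᵀ‖_F² / 2`; expanding `‖2 (X̂ - X₀) - (ÛÛᵀ - UUᵀ)‖_F² ≥ 0`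
then gives the `sin Θ` bound `‖ÛÛᵀ - X₀‖_F² ≤ 4 ‖X̂ - X₀‖_F²`. Taking for `O` the orthogonal
factor of a polar decomposition of `Uᵀ Û` gives `‖Û - U O‖_F ≤ ‖ÛÛᵀ - UUᵀ‖_F`. As `Z ν O` has
at most `r` distinct rows, k-means optimality of `C` yields `‖C - Z ν O‖_F² ≤ 16 ‖X̂ - X₀‖_F²`.
A row within `1 / √(2 m_max)` of its own centre is then strictly closer to it than to any other
centre, and by Markov's inequality at most `32 m_max ‖X̂ - X₀‖_F²` rows are not.
-/

open Matrix
open scoped Classical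

noncomputable section

/-- The size `m_k` of cluster `C_k = {i : z i = k}` of the partition given by `z`. -/
def clusterSize {n r : ℕ} (z : Fin n → Fin r) (k : Fin r) : ℕ :=
  (Finset.univ.filter fun i => z i = k).card

/-- The largest cluster size `m_max`. -/
def mMax {n r : ℕ} [NeZero r] (z : Fin n → Fin r) : ℕ :=
  Finset.univ.sup' Finset.univ_nonempty (clusterSize z)

/-- The ground-truth clustering matrix `X₀`, `(X₀)_{ij} = 1/m_k` if `i,j ∈ C_k`, else `0`. -/
def groundTruth {n r : ℕ} (z : Fin n → Fin r) : Matrix (Fin n) (Fin n) ℝ :=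
  Matrix.of fun i j => if z i = z j then ((clusterSize z (z i) : ℝ))⁻¹ else 0

/-- Squared Frobenius norm `‖A‖_F²`. -/
def frobSq {m k : ℕ} (A : Matrix (Fin m) (Fin k) ℝ) : ℝ := ∑ i, ∑ j, (A i j) ^ 2

/-- The 0/1 membership matrix `Z` with `Z_{ik} = 1` iff `i ∈ C_k`. -/
def Zmat {n r : ℕ} (z : Fin n → Fin r) : Matrix (Fin n) (Fin r) ℝ :=
  Matrix.of fun i k => if z i = k then 1 else 0

/-- `U` consists of (orthonormal) top-`m` eigenvectors of the symmetric matrix `S`. -/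
def IsTopEigenvectors {d m : ℕ} (S : Matrix (Fin d) (Fin d) ℝ)
    (U : Matrix (Fin d) (Fin m) ℝ) : Prop :=
  Uᵀ * U = 1 ∧
    ∃ θ : Fin m → ℝ,
      (∀ j, S.mulVec (fun i => U i j) = θ j • fun i => U i j) ∧
        ∀ w : Fin d → ℝ, (∀ j, (fun i => U i j) ⬝ᵥ w = 0) →
          ∀ j, w ⬝ᵥ S.mulVec w ≤ θ j * (w ⬝ᵥ w)

/-- `C` has at most `r` distinct rows. -/
def HasAtMostRows {n r : ℕ} (C : Matrix (Fin n) (Fin r) ℝ) : Prop :=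
  ∃ (g : Fin n → Fin r) (rows : Fin r → Fin r → ℝ), ∀ i, C i = rows (g i)

open Finset

section Frobenius

variable {m k : ℕ}

lemma frobSq_nonneg (A : Matrix (Fin m) (Fin k) ℝ) : 0 ≤ frobSq A :=
  sum_nonneg fun _ _ => sum_nonneg fun _ _ => sq_nonneg _

lemma frobSq_eq_trace (A : Matrix (Fin m) (Fin k) ℝ) : frobSq A = trace (Aᵀ * A) := by
  simp only [frobSq, trace, Matrix.diag, mul_apply, transpose_apply, sq]
  exact sum_comm

lemma frobSq_sub (A B : Matrix (Fin m) (Fin k) ℝ) :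
    frobSq (A - B) = frobSq A - 2 * trace (Aᵀ * B) + frobSq B := by
  have hBA : trace (Bᵀ * A) = trace (Aᵀ * B) := by
    rw [← trace_transpose, transpose_mul, transpose_transpose]
  simp only [frobSq_eq_trace, transpose_sub, Matrix.sub_mul, Matrix.mul_sub, trace_sub, hBA]
  ring

lemma frobSq_sub_comm (A B : Matrix (Fin m) (Fin k) ℝ) : frobSq (A - B) = frobSq (B - A) := by
  rw [← neg_sub]
  simp only [frobSq, Matrix.neg_apply, neg_sq]

lemma frobSq_add_le (A B : Matrix (Fin m) (Fin k) ℝ) :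
    frobSq (A + B) ≤ 2 * (frobSq A + frobSq B) := by
  simp only [frobSq, mul_sum, ← sum_add_distrib]
  exact sum_le_sum fun i _ => sum_le_sum fun j _ => add_sq_le

lemma frobSq_smul (c : ℝ) (A : Matrix (Fin m) (Fin k) ℝ) :
    frobSq (c • A) = c ^ 2 * frobSq A := by
  simp only [frobSq, Matrix.smul_apply, smul_eq_mul, mul_pow, mul_sum]

lemma two_mul_trace_transpose_mul_le (A B : Matrix (Fin m) (Fin k) ℝ) :
    2 * trace (Aᵀ * B) ≤ frobSq A + frobSq B := by
  linarith [frobSq_sub A B, frobSq_nonneg (A - B)]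

lemma card_filter_mul_sq_le_frobSq {δ : ℝ} (hδ : 0 ≤ δ) (A : Matrix (Fin m) (Fin k) ℝ) :
    (#{i | δ ≤ √(∑ j, A i j ^ 2)} : ℝ) * δ ^ 2 ≤ frobSq A := by
  calc (#{i | δ ≤ √(∑ j, A i j ^ 2)} : ℝ) * δ ^ 2
      ≤ ∑ i with δ ≤ √(∑ j, A i j ^ 2), ∑ j, A i j ^ 2 := by
        rw [← nsmul_eq_mul]
        refine card_nsmul_le_sum _ _ _ fun i hi => ?_
        have hi : δ ≤ √(∑ j, A i j ^ 2) := (mem_filter.mp hi).2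
        calc δ ^ 2 ≤ √(∑ j, A i j ^ 2) ^ 2 := pow_le_pow_left₀ hδ hi 2
          _ = _ := Real.sq_sqrt (sum_nonneg fun _ _ => sq_nonneg _)
    _ ≤ frobSq A := sum_le_sum_of_subset_of_nonneg (subset_univ _)
        fun _ _ _ => sum_nonneg fun _ _ => sq_nonneg _

end Frobenius

section Identities

variable {n r : ℕ}

lemma dotProduct_mulVec_eq_transpose_mulVec (U : Matrix (Fin n) (Fin r) ℝ) (w : Fin n → ℝ)
    (v : Fin r → ℝ) : w ⬝ᵥ (U *ᵥ v) = (Uᵀ *ᵥ w) ⬝ᵥ v := by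
  rw [dotProduct_mulVec, mulVec_transpose]

lemma trace_mul_transpose_mul_mul_transpose (U V : Matrix (Fin n) (Fin r) ℝ) :
    trace (U * Uᵀ * (V * Vᵀ)) = frobSq (Uᵀ * V) := by
  rw [← Matrix.mul_assoc, trace_mul_comm, frobSq_eq_trace, transpose_mul, transpose_transpose]
  simp only [Matrix.mul_assoc]

lemma trace_transpose_mul_mul_eq (A : Matrix (Fin n) (Fin n) ℝ) (U : Matrix (Fin n) (Fin r) ℝ) :
    trace (Uᵀ * A * U) = trace (A * (U * Uᵀ)) := by
  rw [Matrix.mul_assoc, trace_mul_comm, Matrix.mul_assoc]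

lemma trace_transpose_mul_mul_eq_sum (X : Matrix (Fin n) (Fin n) ℝ)
    (U : Matrix (Fin n) (Fin r) ℝ) : trace (Uᵀ * X * U) = ∑ k, Uᵀ k ⬝ᵥ (X *ᵥ Uᵀ k) := by
  refine sum_congr rfl fun k _ => ?_
  simp only [Matrix.diag, mul_apply, transpose_apply, mulVec, dotProduct, sum_mul, mul_sum]
  rw [sum_comm]
  exact sum_congr rfl fun _ _ => sum_congr rfl fun _ _ => by ring

end Identities

section Orthonormal

variable {n r : ℕ} {U V : Matrix (Fin n) (Fin r) ℝ}

lemma dotProduct_mulVec_self_of_orthonormal (hU : Uᵀ * U = 1) (v : Fin r → ℝ) :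
    (U *ᵥ v) ⬝ᵥ (U *ᵥ v) = v ⬝ᵥ v := by
  rw [dotProduct_mulVec_eq_transpose_mulVec, mulVec_mulVec, hU, one_mulVec]

lemma transpose_mulVec_dotProduct_self_le (hU : Uᵀ * U = 1) (x : Fin n → ℝ) :
    (Uᵀ *ᵥ x) ⬝ᵥ (Uᵀ *ᵥ x) ≤ x ⬝ᵥ x := by
  set y := Uᵀ *ᵥ x
  have hxy : x ⬝ᵥ (U *ᵥ y) = y ⬝ᵥ y := by rw [dotProduct_mulVec_eq_transpose_mulVec]
  have hres : (x - U *ᵥ y) ⬝ᵥ (x - U *ᵥ y) = x ⬝ᵥ x - y ⬝ᵥ y := by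
    rw [sub_dotProduct, dotProduct_sub, dotProduct_sub, dotProduct_comm (U *ᵥ y) x, hxy,
      dotProduct_mulVec_self_of_orthonormal hU]
    ring
  have hnonneg := dotProduct_star_self_nonneg (x - U *ᵥ y)
  rw [star_trivial, hres] at hnonneg
  linarith

lemma dotProduct_self_col_of_orthonormal (hU : Uᵀ * U = 1) (k : Fin r) : Uᵀ k ⬝ᵥ Uᵀ k = 1 := by
  have h := congrFun (congrFun hU k) k
  rw [mul_apply', one_apply_eq] at h
  exact h

lemma trace_mul_transpose_of_orthonormal (hU : Uᵀ * U = 1) : trace (U * Uᵀ) = r := by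
  rw [trace_mul_comm, hU, trace_one, Fintype.card_fin]

lemma mul_transpose_mul_self_of_orthonormal (hU : Uᵀ * U = 1) :
    U * Uᵀ * (U * Uᵀ) = U * Uᵀ := by
  rw [Matrix.mul_assoc, ← Matrix.mul_assoc Uᵀ, hU, Matrix.one_mul]

lemma frobSq_mul_transpose_sub (hU : Uᵀ * U = 1) (hV : Vᵀ * V = 1) :
    frobSq (V * Vᵀ - U * Uᵀ) = 2 * (r - frobSq (Uᵀ * V)) := by
  have hproj : ∀ {W : Matrix (Fin n) (Fin r) ℝ}, Wᵀ * W = 1 → frobSq (W * Wᵀ) = r := by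
    intro W hW
    rw [frobSq_eq_trace, transpose_mul, transpose_transpose,
      mul_transpose_mul_self_of_orthonormal hW, trace_mul_transpose_of_orthonormal hW]
  have hcross : trace ((V * Vᵀ)ᵀ * (U * Uᵀ)) = frobSq (Uᵀ * V) := by
    rw [transpose_mul, transpose_transpose, trace_mul_comm,
      trace_mul_transpose_mul_mul_transpose]
  rw [frobSq_sub, hproj hU, hproj hV, hcross]
  ring

lemma frobSq_sub_mul_of_orthonormal (hU : Uᵀ * U = 1) (hV : Vᵀ * V = 1)
    {O : Matrix (Fin r) (Fin r) ℝ} (hO : Oᵀ * O = 1) :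
    frobSq (V - U * O) = 2 * (r - trace (Oᵀ * (Uᵀ * V))) := by
  have hUO : (U * O)ᵀ * (U * O) = 1 := by
    rw [transpose_mul, Matrix.mul_assoc, ← Matrix.mul_assoc Uᵀ, hU, Matrix.one_mul, hO]
  have hcross : trace (Vᵀ * (U * O)) = trace (Oᵀ * (Uᵀ * V)) := by
    rw [← trace_transpose, transpose_mul, transpose_mul, transpose_transpose, Matrix.mul_assoc]
  rw [frobSq_sub, frobSq_eq_trace, frobSq_eq_trace, hV, hUO, hcross, trace_one,
    Fintype.card_fin]
  ring

end Orthonormal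

section TopEigenvectors

variable {n r : ℕ} {X : Matrix (Fin n) (Fin n) ℝ} {Uh U : Matrix (Fin n) (Fin r) ℝ}

lemma IsTopEigenvectors.exists_diagonal (h : IsTopEigenvectors X U) :
    ∃ θ : Fin r → ℝ, X * U = U * diagonal θ ∧
      ∀ w, Uᵀ *ᵥ w = 0 → ∀ j, w ⬝ᵥ (X *ᵥ w) ≤ θ j * (w ⬝ᵥ w) := by
  obtain ⟨-, θ, heig, htop⟩ := h
  refine ⟨θ, ?_, fun w hw => htop w fun j => congrFun hw j⟩
  ext i j
  rw [mul_diagonal, mul_apply, mul_comm (U i j)]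
  simpa [mulVec, dotProduct] using congrFun (heig j) i

lemma dotProduct_mulVec_le_of_mul_eq_mul_diagonal (hX : X.IsSymm) (hUh : Uhᵀ * Uh = 1)
    {θ : Fin r → ℝ} (hXU : X * Uh = Uh * diagonal θ) {θ₀ : ℝ}
    (htop : ∀ w, Uhᵀ *ᵥ w = 0 → w ⬝ᵥ (X *ᵥ w) ≤ θ₀ * (w ⬝ᵥ w)) (u : Fin n → ℝ) :
    u ⬝ᵥ (X *ᵥ u) ≤ (Uhᵀ *ᵥ u) ⬝ᵥ (diagonal θ *ᵥ (Uhᵀ *ᵥ u)) +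
      θ₀ * (u ⬝ᵥ u - (Uhᵀ *ᵥ u) ⬝ᵥ (Uhᵀ *ᵥ u)) := by
  set c := Uhᵀ *ᵥ u
  set p := Uh *ᵥ c
  set w := u - p
  have hc : Uhᵀ *ᵥ p = c := by rw [mulVec_mulVec, hUh, one_mulVec]
  have hw : Uhᵀ *ᵥ w = 0 := by rw [mulVec_sub, hc, sub_self]
  have hXp : X *ᵥ p = Uh *ᵥ (diagonal θ *ᵥ c) := by rw [mulVec_mulVec, hXU, ← mulVec_mulVec]
  have hwXp : w ⬝ᵥ (X *ᵥ p) = 0 := by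
    rw [hXp, dotProduct_mulVec_eq_transpose_mulVec, hw, zero_dotProduct]
  have hpXw : p ⬝ᵥ (X *ᵥ w) = 0 := by
    rw [dotProduct_mulVec_eq_transpose_mulVec, hX.eq, hXp, dotProduct_comm,
      dotProduct_mulVec_eq_transpose_mulVec, hw, zero_dotProduct]
  have hpXp : p ⬝ᵥ (X *ᵥ p) = c ⬝ᵥ (diagonal θ *ᵥ c) := by
    rw [hXp, dotProduct_mulVec_eq_transpose_mulVec, hc]
  have hup : u ⬝ᵥ p = c ⬝ᵥ c := dotProduct_mulVec_eq_transpose_mulVec _ _ _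
  have hww : w ⬝ᵥ w = u ⬝ᵥ u - c ⬝ᵥ c := by
    rw [sub_dotProduct, dotProduct_sub, dotProduct_sub, dotProduct_comm p u, hup,
      dotProduct_mulVec_self_of_orthonormal hUh]
    ring
  have hsplit : u ⬝ᵥ (X *ᵥ u) = p ⬝ᵥ (X *ᵥ p) + w ⬝ᵥ (X *ᵥ w) := by
    have hu : u = p + w := (add_sub_cancel p u).symm
    conv_lhs => rw [hu]
    rw [mulVec_add, add_dotProduct, dotProduct_add, dotProduct_add, hpXw, hwXp]
    ring
  rw [hsplit, hpXp, ← hww]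
  linarith [htop w hw]

lemma trace_transpose_mul_mul_le_of_isTopEigenvectors [NeZero r] (hX : X.IsSymm)
    (hUh : IsTopEigenvectors X Uh) (hU : Uᵀ * U = 1) :
    trace (Uᵀ * X * U) ≤ trace (Uhᵀ * X * Uh) := by
  obtain ⟨θ, hXU, htop⟩ := hUh.exists_diagonal
  obtain ⟨j₀, hj₀⟩ := Finite.exists_min θ
  set M := Uhᵀ * U
  have hcol_eq : ∀ k, Uhᵀ *ᵥ Uᵀ k = fun j => M j k := fun k => by
    ext j
    simp only [M, mulVec, mul_apply, dotProduct, transpose_apply]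
  have hrow_eq : ∀ j, Uᵀ *ᵥ Uhᵀ j = M j := fun j => by
    ext k
    simp only [M, mulVec, mul_apply, dotProduct, transpose_apply, mul_comm]
  have hrow_le : ∀ j, M j ⬝ᵥ M j ≤ 1 := fun j => by
    simpa only [hrow_eq, dotProduct_self_col_of_orthonormal hUh.1] using
      transpose_mulVec_dotProduct_self_le hU (Uhᵀ j)
  have hrow_nonneg : ∀ j, 0 ≤ M j ⬝ᵥ M j := fun j => by
    simpa only [star_trivial] using dotProduct_star_self_nonneg (M j)
  have hcol : ∀ k, Uᵀ k ⬝ᵥ (X *ᵥ Uᵀ k) ≤ (fun j => M j k) ⬝ᵥ (diagonal θ *ᵥ fun j => M j k) +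
      θ j₀ * (1 - (fun j => M j k) ⬝ᵥ fun j => M j k) := fun k => by
    simpa only [dotProduct_self_col_of_orthonormal hU, hcol_eq] using
      dotProduct_mulVec_le_of_mul_eq_mul_diagonal hX hUh.1 hXU
        (fun w hw => htop w hw j₀) (Uᵀ k)
  calc trace (Uᵀ * X * U) = ∑ k, Uᵀ k ⬝ᵥ (X *ᵥ Uᵀ k) := trace_transpose_mul_mul_eq_sum X U
    _ ≤ ∑ k, ((fun j => M j k) ⬝ᵥ (diagonal θ *ᵥ fun j => M j k) +
        θ j₀ * (1 - (fun j => M j k) ⬝ᵥ fun j => M j k)) := sum_le_sum fun k _ => hcol k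
    _ = ∑ j, (θ j * (M j ⬝ᵥ M j) + θ j₀ * (1 - M j ⬝ᵥ M j)) := by
        simp only [dotProduct, mulVec_diagonal, mul_sub, mul_one, sum_add_distrib,
          sum_sub_distrib, mul_sum, mul_left_comm _ (θ _)]
        rw [sum_comm (f := fun k j => θ j * (M j k * M j k)),
          sum_comm (f := fun k j => θ j₀ * (M j k * M j k))]
    _ ≤ ∑ j, θ j := sum_le_sum fun j _ => by nlinarith [hrow_le j, hrow_nonneg j, hj₀ j]
    _ = trace (Uhᵀ * X * Uh) := by
        rw [Matrix.mul_assoc, hXU, ← Matrix.mul_assoc, hUh.1, Matrix.one_mul, trace_diagonal]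

lemma frobSq_mul_transpose_sub_le [NeZero r] (hX : X.IsSymm) (hUh : IsTopEigenvectors X Uh)
    (hU : Uᵀ * U = 1) : frobSq (Uh * Uhᵀ - U * Uᵀ) ≤ 4 * frobSq (X - U * Uᵀ) := by
  set D := Uh * Uhᵀ - U * Uᵀ
  set E := X - U * Uᵀ
  have hEsymm : Eᵀ = E := by
    rw [transpose_sub, hX.eq, transpose_mul, transpose_transpose]
  have hUD : trace (U * Uᵀ * D) = -(frobSq D / 2) := by
    rw [frobSq_mul_transpose_sub hU hUh.1, Matrix.mul_sub, trace_sub,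
      mul_transpose_mul_self_of_orthonormal hU, trace_mul_transpose_of_orthonormal hU,
      trace_mul_transpose_mul_mul_transpose]
    ring
  have hXD : 0 ≤ trace (X * D) := by
    rw [Matrix.mul_sub, trace_sub, sub_nonneg, ← trace_transpose_mul_mul_eq,
      ← trace_transpose_mul_mul_eq]
    exact trace_transpose_mul_mul_le_of_isTopEigenvectors hX hUh hU
  have hED : frobSq D / 2 ≤ trace (Eᵀ * D) := by
    rw [hEsymm, Matrix.sub_mul, trace_sub, hUD]
    linarith
  have hAMGM := two_mul_trace_transpose_mul_le ((2 : ℝ) • E) D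
  rw [frobSq_smul, transpose_smul, smul_mul, trace_smul, smul_eq_mul] at hAMGM
  linarith

end TopEigenvectors

section Procrustes

variable {r : ℕ}

lemma isCompact_orthogonal : IsCompact {O : Matrix (Fin r) (Fin r) ℝ | Oᵀ * O = 1} := by
  have hcont : Continuous fun O : Matrix (Fin r) (Fin r) ℝ => Oᵀ * O :=
    (Continuous.matrix_transpose continuous_id).matrix_mul continuous_id
  have hclosed : IsClosed {O : Matrix (Fin r) (Fin r) ℝ | Oᵀ * O = 1} :=
    isClosed_eq hcont continuous_const
  refine (isCompact_univ_pi fun _ => isCompact_univ_pi fun _ => isCompact_Icc (a := -1)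
    (b := 1)).of_isClosed_subset hclosed
    fun (O : Matrix (Fin r) (Fin r) ℝ) (hO : Oᵀ * O = 1) i _ j _ => ?_
  have hcol : ∑ k, O k j * O k j = 1 := by
    simpa [mul_apply, one_apply] using congrFun (congrFun hO j) j
  have hle : O i j * O i j ≤ 1 :=
    hcol ▸ single_le_sum (f := fun k => O k j * O k j) (fun k _ => mul_self_nonneg _)
      (mem_univ i)
  constructor <;> nlinarith

/-- A Givens rotation in the `(i, j)`-plane. -/
lemma exists_orthogonal_trace_transpose_mul_eq (S : Matrix (Fin r) (Fin r) ℝ) {i j : Fin r}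
    (hij : i ≠ j) {c s : ℝ} (hcs : c ^ 2 + s ^ 2 = 1) :
    ∃ Q : Matrix (Fin r) (Fin r) ℝ, Qᵀ * Q = 1 ∧
      trace (Qᵀ * S) = trace S + ((c - 1) * (S i i + S j j) + s * (S j i - S i j)) := by
  set A : Matrix (Fin r) (Fin r) ℝ := single i i 1 + single j j 1
  set B : Matrix (Fin r) (Fin r) ℝ := single j i 1 - single i j 1
  have hAA : A * A = A := by
    simp only [A, Matrix.add_mul, Matrix.mul_add, single_mul_single_same,
      single_mul_single_of_ne _ _ _ _ hij, single_mul_single_of_ne _ _ _ _ hij.symm,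
      one_mul, add_zero, zero_add]
  have hAB : A * B = B := by
    simp only [A, B, Matrix.add_mul, Matrix.mul_sub, single_mul_single_same,
      single_mul_single_of_ne _ _ _ _ hij, single_mul_single_of_ne _ _ _ _ hij.symm, one_mul]
    abel
  have hBA : B * A = B := by
    simp only [A, B, Matrix.mul_add, Matrix.sub_mul, single_mul_single_same,
      single_mul_single_of_ne _ _ _ _ hij, single_mul_single_of_ne _ _ _ _ hij.symm, one_mul]
    abel
  have hBB : B * B = -A := by
    simp only [A, B, Matrix.sub_mul, Matrix.mul_sub, single_mul_single_same,
      single_mul_single_of_ne _ _ _ _ hij, single_mul_single_of_ne _ _ _ _ hij.symm, one_mul]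
    abel
  have hAT : Aᵀ = A := by simp only [A, transpose_add, transpose_single]
  have hBT : Bᵀ = -B := by
    simp only [B, transpose_sub, transpose_single]
    abel
  refine ⟨1 + (c - 1) • A + s • B, ?_, ?_⟩
  · have hQT : (1 + (c - 1) • A + s • B)ᵀ = 1 + (c - 1) • A - s • B := by
      simp only [transpose_add, transpose_smul, transpose_one, hAT, hBT, smul_neg]
      abel
    have hzero : (c - 1) ^ 2 + 2 * (c - 1) + s ^ 2 = 0 := by linear_combination hcs
    calc (1 + (c - 1) • A + s • B)ᵀ * (1 + (c - 1) • A + s • B)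
        = 1 + ((c - 1) ^ 2 + 2 * (c - 1) + s ^ 2) • A := by
          rw [hQT]
          simp only [Matrix.add_mul, Matrix.mul_add, Matrix.sub_mul, Matrix.smul_mul,
            Matrix.mul_smul, hAA, hAB, hBA, hBB, Matrix.mul_one, Matrix.one_mul, smul_neg]
          module
      _ = 1 := by rw [hzero, zero_smul, add_zero]
  · simp only [transpose_add, transpose_smul, transpose_one, hAT, hBT, Matrix.add_mul,
      Matrix.smul_mul, neg_mul, trace_add, trace_smul, trace_neg, A, B,
      Matrix.sub_mul, trace_sub, trace_single_mul, one_mul, smul_eq_mul]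
    ring

lemma transpose_eq_of_forall_trace_le {S : Matrix (Fin r) (Fin r) ℝ}
    (hmax : ∀ Q : Matrix (Fin r) (Fin r) ℝ, Qᵀ * Q = 1 → trace (Qᵀ * S) ≤ trace S) :
    Sᵀ = S := by
  ext i j
  rw [transpose_apply]
  rcases eq_or_ne i j with rfl | hij
  · rfl
  set a := S i i + S j j
  set b := S j i - S i j
  -- rotate by the angle with `tan (θ / 2) = t`, a rational parametrization of the circle
  have hrot : ∀ t : ℝ, t * b ≤ t ^ 2 * a := fun t => by
    have hpos : 0 < 1 + t ^ 2 := by positivity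
    obtain ⟨Q, hQ, htr⟩ := exists_orthogonal_trace_transpose_mul_eq S hij
      (c := (1 - t ^ 2) / (1 + t ^ 2)) (s := 2 * t / (1 + t ^ 2)) (by field_simp; ring)
    have hle := hmax Q hQ
    rw [htr] at hle
    have : ((1 - t ^ 2) / (1 + t ^ 2) - 1) * a + 2 * t / (1 + t ^ 2) * b
        = 2 * (t * b - t ^ 2 * a) / (1 + t ^ 2) := by field_simp; ring
    have hnonpos : 2 * (t * b - t ^ 2 * a) / (1 + t ^ 2) ≤ 0 := by rw [← this]; linarith
    rw [div_le_iff₀ hpos, zero_mul] at hnonpos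
    linarith
  have hb : b = 0 := by
    have h := hrot (b / (|a| + 1))
    have hpos : 0 < |a| + 1 := by positivity
    rw [div_pow, div_mul_eq_mul_div, div_mul_eq_mul_div, div_le_div_iff₀ hpos (by positivity)] at h
    have h' : b ^ 2 * ((|a| + 1) * (|a| + 1 - a)) ≤ 0 := by linear_combination h
    have hpos' : 0 < (|a| + 1) * (|a| + 1 - a) := mul_pos hpos (by linarith [le_abs_self a])
    have hb2 : b ^ 2 = 0 := le_antisymm (by nlinarith) (sq_nonneg b)
    exact pow_eq_zero_iff two_ne_zero |>.mp hb2
  linarith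

lemma exists_orthogonal_diagonalization {S : Matrix (Fin r) (Fin r) ℝ} (hS : Sᵀ = S) :
    ∃ (V : Matrix (Fin r) (Fin r) ℝ) (d : Fin r → ℝ), Vᵀ * V = 1 ∧ S = V * diagonal d * Vᵀ := by
  have hHerm : S.IsHermitian := by
    rw [IsHermitian, conjTranspose_eq_transpose_of_trivial, hS]
  have hstar : star (hHerm.eigenvectorUnitary : Matrix (Fin r) (Fin r) ℝ) =
      (hHerm.eigenvectorUnitary : Matrix (Fin r) (Fin r) ℝ)ᵀ := by
    rw [star_eq_conjTranspose, conjTranspose_eq_transpose_of_trivial]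
  refine ⟨hHerm.eigenvectorUnitary, hHerm.eigenvalues, ?_, ?_⟩
  · rw [← hstar, Unitary.coe_star_mul_self]
  · conv_lhs => rw [hHerm.spectral_theorem, Unitary.conjStarAlgAut_apply, hstar]
    rfl

lemma trace_transpose_mul_self_le_trace {S : Matrix (Fin r) (Fin r) ℝ}
    (hmax : ∀ Q : Matrix (Fin r) (Fin r) ℝ, Qᵀ * Q = 1 → trace (Qᵀ * S) ≤ trace S)
    (hcontr : ∀ v, (S *ᵥ v) ⬝ᵥ (S *ᵥ v) ≤ v ⬝ᵥ v) : trace (Sᵀ * S) ≤ trace S := by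
  obtain ⟨V, d, hV, rfl⟩ := exists_orthogonal_diagonalization (transpose_eq_of_forall_trace_le hmax)
  have hVVt : V * Vᵀ = 1 := mul_eq_one_comm.mp hV
  have htr : ∀ D, trace (V * D * Vᵀ) = trace D := fun D => by
    rw [trace_mul_comm, ← Matrix.mul_assoc, hV, Matrix.one_mul]
  have hmul : ∀ D₁ D₂, V * D₁ * Vᵀ * (V * D₂ * Vᵀ) = V * (D₁ * D₂) * Vᵀ := fun D₁ D₂ => by
    simp only [Matrix.mul_assoc, ← Matrix.mul_assoc Vᵀ V, hV, Matrix.one_mul]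
  have hT : ∀ D : Matrix (Fin r) (Fin r) ℝ, (V * D * Vᵀ)ᵀ = V * Dᵀ * Vᵀ := fun D => by
    simp only [transpose_mul, transpose_transpose, Matrix.mul_assoc]
  have hd_nonneg : ∀ k, 0 ≤ d k := fun k => by
    -- the reflection of the `k`-th eigenvector
    set ε : Fin r → ℝ := fun l => if l = k then -1 else 1
    have hQ : (V * diagonal ε * Vᵀ)ᵀ * (V * diagonal ε * Vᵀ) = 1 := by
      have hεε : (fun l => ε l * ε l) = fun _ => 1 := by
        ext l
        by_cases h : l = k <;> simp [ε, h]
      rw [hT, diagonal_transpose, hmul, diagonal_mul_diagonal, hεε, diagonal_one,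
        Matrix.mul_one, hVVt]
    have h := hmax _ hQ
    rw [hT, diagonal_transpose, hmul, diagonal_mul_diagonal, htr, htr, trace_diagonal,
      trace_diagonal, ← sub_nonneg, ← sum_sub_distrib, sum_eq_single k] at h
    · simp only [ε, if_pos rfl] at h
      linarith
    · intro l _ hl
      simp [ε, hl]
    · simp
  have hd_le : ∀ k, d k ≤ 1 := fun k => by
    have hS : (V * diagonal d * Vᵀ) *ᵥ (V *ᵥ Pi.single k 1) = V *ᵥ Pi.single k (d k) := by
      rw [mulVec_mulVec, Matrix.mul_assoc, hV, Matrix.mul_one, ← mulVec_mulVec,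
        diagonal_mulVec_single, mul_one]
    have h := hcontr (V *ᵥ Pi.single k 1)
    rw [hS, dotProduct_mulVec_self_of_orthonormal hV, dotProduct_mulVec_self_of_orthonormal hV]
      at h
    simp only [dotProduct_single, Pi.single_eq_same, mul_one] at h
    nlinarith
  rw [hT, diagonal_transpose, hmul, diagonal_mul_diagonal, htr, htr, trace_diagonal,
    trace_diagonal]
  exact sum_le_sum fun k _ => by nlinarith [hd_nonneg k, hd_le k]

/-- `O` maximizes `trace (Oᵀ * M)` over the compact orthogonal group, which makes `Oᵀ * M` the
positive factor of a polar decomposition of `M`. -/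
lemma exists_orthogonal_trace_transpose_mul_self_le {M : Matrix (Fin r) (Fin r) ℝ}
    (hM : ∀ v, (M *ᵥ v) ⬝ᵥ (M *ᵥ v) ≤ v ⬝ᵥ v) :
    ∃ O : Matrix (Fin r) (Fin r) ℝ, Oᵀ * O = 1 ∧ trace (Mᵀ * M) ≤ trace (Oᵀ * M) := by
  have hcont : Continuous fun O : Matrix (Fin r) (Fin r) ℝ => trace (Oᵀ * M) :=
    ((Continuous.matrix_transpose continuous_id).matrix_mul continuous_const).matrix_trace
  obtain ⟨O, hO, hmax⟩ :=
    isCompact_orthogonal.exists_isMaxOn ⟨1, by simp⟩ hcont.continuousOn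
  have hO : Oᵀ * O = 1 := hO
  have hOOt : O * Oᵀ = 1 := mul_eq_one_comm.mp hO
  refine ⟨O, hO, ?_⟩
  have h := trace_transpose_mul_self_le_trace (S := Oᵀ * M) (fun Q hQ => ?_) (fun v => ?_)
  · rwa [transpose_mul, transpose_transpose, Matrix.mul_assoc, ← Matrix.mul_assoc O, hOOt,
      Matrix.one_mul] at h
  · have hOQ : (O * Q)ᵀ * (O * Q) = 1 := by
      rw [transpose_mul, Matrix.mul_assoc, ← Matrix.mul_assoc Oᵀ, hO, Matrix.one_mul, hQ]
    have h := hmax hOQ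
    simp only [Set.mem_ofPred_eq, transpose_mul, Matrix.mul_assoc] at h
    exact h
  · rw [← mulVec_mulVec, dotProduct_mulVec_self_of_orthonormal (by rwa [transpose_transpose])]
    exact hM v

lemma exists_orthogonal_frobSq_sub_mul_le {n : ℕ} {U V : Matrix (Fin n) (Fin r) ℝ}
    (hU : Uᵀ * U = 1) (hV : Vᵀ * V = 1) :
    ∃ O : Matrix (Fin r) (Fin r) ℝ, Oᵀ * O = 1 ∧ frobSq (V - U * O) ≤ frobSq (V * Vᵀ - U * Uᵀ) := by
  obtain ⟨O, hO, hle⟩ := exists_orthogonal_trace_transpose_mul_self_le (M := Uᵀ * V) fun v => by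
    rw [← mulVec_mulVec, ← dotProduct_mulVec_self_of_orthonormal hV v]
    exact transpose_mulVec_dotProduct_self_le hU _
  refine ⟨O, hO, ?_⟩
  rw [frobSq_sub_mul_of_orthonormal hU hV hO, frobSq_mul_transpose_sub hU hV, frobSq_eq_trace]
  linarith

end Procrustes

lemma sqrt_sum_sub_sq_eq_dist {d : ℕ} (x y : Fin d → ℝ) :
    √(∑ k, (x k - y k) ^ 2) = dist (WithLp.toLp 2 x) (WithLp.toLp 2 y) := by
  simp only [EuclideanSpace.dist_eq, Real.dist_eq, sq_abs]

lemma dist_lt_dist_of_two_mul_le_dist {α : Type*} [PseudoMetricSpace α] {c a b : α} {δ : ℝ}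
    (hca : dist c a < δ) (hab : 2 * δ ≤ dist a b) : dist c a < dist c b := by
  linarith [dist_triangle a c b, dist_comm c a]

section Clusters

variable {n r : ℕ} {z : Fin n → Fin r}

lemma Zmat_mul_apply (z : Fin n → Fin r) {k : ℕ} (A : Matrix (Fin r) (Fin k) ℝ) (i : Fin n)
    (l : Fin k) : (Zmat z * A) i l = A (z i) l := by
  simp [Zmat, mul_apply]

lemma Zmat_mul_mul_transpose_apply (z : Fin n → Fin r) (A : Matrix (Fin r) (Fin r) ℝ)
    (i j : Fin n) : (Zmat z * A * (Zmat z)ᵀ) i j = A (z i) (z j) := by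
  rw [Matrix.mul_assoc, Zmat_mul_apply, ← transpose_apply (A * _), transpose_mul,
    transpose_transpose, Zmat_mul_apply, transpose_apply]

lemma hasAtMostRows_Zmat_mul (z : Fin n → Fin r) (A : Matrix (Fin r) (Fin r) ℝ) :
    HasAtMostRows (Zmat z * A) :=
  ⟨z, A, fun i => funext (Zmat_mul_apply z A i)⟩

lemma Zmat_transpose_mul_self (z : Fin n → Fin r) :
    (Zmat z)ᵀ * Zmat z = diagonal fun k => (clusterSize z k : ℝ) := by
  ext k l
  rcases eq_or_ne k l with rfl | hkl
  · simp only [Zmat, mul_apply, transpose_apply, of_apply, mul_ite, mul_one, mul_zero,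
      diagonal_apply_eq, clusterSize, card_filter, Nat.cast_sum]
    exact sum_congr rfl fun i _ => by by_cases h : z i = k <;> simp [h]
  · simp only [Zmat, mul_apply, transpose_apply, of_apply, mul_ite, mul_one, mul_zero,
      diagonal_apply_ne _ hkl]
    exact sum_eq_zero fun i _ => by
      split_ifs with h₁ h₂ <;> first | rfl | exact absurd (h₂.symm.trans h₁) hkl

lemma clusterSize_pos (hz : Function.Surjective z) (k : Fin r) : 0 < clusterSize z k := by
  obtain ⟨i, rfl⟩ := hz k
  exact card_pos.mpr ⟨i, mem_filter.mpr ⟨mem_univ i, rfl⟩⟩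

lemma clusterSize_le_mMax [NeZero r] (z : Fin n → Fin r) (k : Fin r) :
    clusterSize z k ≤ mMax z :=
  le_sup' _ (mem_univ k)

lemma mul_transpose_eq_diagonal_inv (hz : Function.Surjective z) {ν : Matrix (Fin r) (Fin r) ℝ}
    (hU : (Zmat z * ν)ᵀ * (Zmat z * ν) = 1) :
    ν * νᵀ = diagonal fun k => (clusterSize z k : ℝ)⁻¹ := by
  set D := diagonal fun k => (clusterSize z k : ℝ)
  have hDinv : D * diagonal (fun k => (clusterSize z k : ℝ)⁻¹) = 1 := by
    rw [diagonal_mul_diagonal, ← diagonal_one]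
    congr 1
    ext k
    exact mul_inv_cancel₀ (Nat.cast_ne_zero.mpr (clusterSize_pos hz k).ne')
  have hνDν : νᵀ * D * ν = 1 := by
    rw [← hU, transpose_mul, Matrix.mul_assoc, Matrix.mul_assoc, ← Matrix.mul_assoc (Zmat z)ᵀ,
      Zmat_transpose_mul_self]
  have hν : ν * (νᵀ * D) = 1 := mul_eq_one_comm.mp hνDν
  rw [← Matrix.mul_one (ν * νᵀ), ← hDinv, ← Matrix.mul_assoc, Matrix.mul_assoc ν, hν,
    Matrix.one_mul]

lemma mul_transpose_eq_groundTruth (hz : Function.Surjective z) {ν : Matrix (Fin r) (Fin r) ℝ}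
    (hU : (Zmat z * ν)ᵀ * (Zmat z * ν) = 1) :
    (Zmat z * ν) * (Zmat z * ν)ᵀ = groundTruth z := by
  ext i j
  rw [transpose_mul, ← Matrix.mul_assoc, Matrix.mul_assoc (Zmat z),
    Zmat_mul_mul_transpose_apply, mul_transpose_eq_diagonal_inv hz hU, diagonal_apply]
  rfl

lemma sum_sub_sq_rows_mul_eq_inv_add_inv (hz : Function.Surjective z)
    {ν O : Matrix (Fin r) (Fin r) ℝ} (hU : (Zmat z * ν)ᵀ * (Zmat z * ν) = 1) (hO : Oᵀ * O = 1)
    {a b : Fin r} (hab : a ≠ b) :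
    ∑ k, ((ν * O) a k - (ν * O) b k) ^ 2 = (clusterSize z a : ℝ)⁻¹ + (clusterSize z b : ℝ)⁻¹ := by
  have hrows : (ν * O) * (ν * O)ᵀ = diagonal fun k => (clusterSize z k : ℝ)⁻¹ := by
    rw [transpose_mul, Matrix.mul_assoc, ← Matrix.mul_assoc O, mul_eq_one_comm.mp hO,
      Matrix.one_mul, mul_transpose_eq_diagonal_inv hz hU]
  have hdot : ∀ c d, (ν * O) c ⬝ᵥ (ν * O) d = diagonal (fun k => (clusterSize z k : ℝ)⁻¹) c d :=
    fun c d => by rw [← hrows, mul_apply']; rfl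
  have hexp : ∑ k, ((ν * O) a k - (ν * O) b k) ^ 2 =
      (ν * O) a ⬝ᵥ (ν * O) a - 2 * (ν * O) a ⬝ᵥ (ν * O) b + (ν * O) b ⬝ᵥ (ν * O) b := by
    simp only [dotProduct, mul_sum, ← sum_sub_distrib, ← sum_add_distrib]
    exact sum_congr rfl fun k _ => by ring
  rw [hexp, hdot, hdot, hdot, diagonal_apply_eq, diagonal_apply_eq, diagonal_apply_ne _ hab]
  ring

lemma two_div_sqrt_le_sqrt_sum_sub_sq [NeZero r] (hz : Function.Surjective z)
    {ν O : Matrix (Fin r) (Fin r) ℝ} (hU : (Zmat z * ν)ᵀ * (Zmat z * ν) = 1) (hO : Oᵀ * O = 1)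
    {a b : Fin r} (hab : a ≠ b) :
    2 * (1 / √(2 * (mMax z : ℝ))) ≤ √(∑ k, ((ν * O) a k - (ν * O) b k) ^ 2) := by
  have hpos : ∀ k, (0 : ℝ) < clusterSize z k := fun k => Nat.cast_pos.mpr (clusterSize_pos hz k)
  have hle : ∀ k, (mMax z : ℝ)⁻¹ ≤ (clusterSize z k : ℝ)⁻¹ := fun k =>
    inv_anti₀ (hpos k) (Nat.cast_le.mpr (clusterSize_le_mMax z k))
  have hm : (0 : ℝ) < mMax z := (hpos a).trans_le (Nat.cast_le.mpr (clusterSize_le_mMax z a))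
  apply Real.le_sqrt_of_sq_le
  rw [sum_sub_sq_rows_mul_eq_inv_add_inv hz hU hO hab, mul_pow, div_pow, one_pow,
    Real.sq_sqrt (by positivity)]
  calc (2 : ℝ) ^ 2 * (1 / (2 * mMax z)) = (mMax z : ℝ)⁻¹ + (mMax z : ℝ)⁻¹ := by
        field_simp
        ring
    _ ≤ _ := add_le_add (hle a) (hle b)

end Clusters

lemma exists_orthogonal_frobSq_sub_Zmat_mul_le {n r : ℕ} [NeZero r] {z : Fin n → Fin r}
    (hz : Function.Surjective z) {Xhat : Matrix (Fin n) (Fin n) ℝ} (hXhat : Xhat.IsSymm)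
    {Uhat : Matrix (Fin n) (Fin r) ℝ} (hUhat : IsTopEigenvectors Xhat Uhat)
    {ν : Matrix (Fin r) (Fin r) ℝ} (hU : IsTopEigenvectors (groundTruth z) (Zmat z * ν))
    {C : Matrix (Fin n) (Fin r) ℝ}
    (hCopt : ∀ M : Matrix (Fin n) (Fin r) ℝ, HasAtMostRows M →
      frobSq (Uhat - C) ≤ frobSq (Uhat - M)) :
    ∃ O : Matrix (Fin r) (Fin r) ℝ, Oᵀ * O = 1 ∧
      frobSq (C - Zmat z * (ν * O)) ≤ 16 * frobSq (Xhat - groundTruth z) := by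
  have hX₀ := mul_transpose_eq_groundTruth hz hU.1
  obtain ⟨O, hO, hprocrustes⟩ := exists_orthogonal_frobSq_sub_mul_le hU.1 hUhat.1
  have hdavisKahan := frobSq_mul_transpose_sub_le hXhat hUhat hU.1
  have hkmeans := hCopt _ (hasAtMostRows_Zmat_mul z (ν * O))
  refine ⟨O, hO, ?_⟩
  rw [← Matrix.mul_assoc] at hkmeans ⊢
  rw [hX₀] at hdavisKahan hprocrustes
  calc frobSq (C - Zmat z * ν * O) = frobSq ((C - Uhat) + (Uhat - Zmat z * ν * O)) := by
        rw [sub_add_sub_cancel]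
    _ ≤ 2 * (frobSq (Uhat - C) + frobSq (Uhat - Zmat z * ν * O)) := by
        rw [frobSq_sub_comm Uhat C]
        exact frobSq_add_le _ _
    _ ≤ 16 * frobSq (Xhat - groundTruth z) := by linarith

theorem spectral_kmeans_miscluster_bound_general {n r : ℕ} [NeZero r] (z : Fin n → Fin r)
    (hz : Function.Surjective z)
    (Xhat : Matrix (Fin n) (Fin n) ℝ) (hXhat : Xhat.IsSymm)
    (Uhat : Matrix (Fin n) (Fin r) ℝ) (hUhat : IsTopEigenvectors Xhat Uhat)
    (ν : Matrix (Fin r) (Fin r) ℝ)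
    (hU : IsTopEigenvectors (groundTruth z) (Zmat z * ν))
    (C : Matrix (Fin n) (Fin r) ℝ)
    (hCopt : ∀ M : Matrix (Fin n) (Fin r) ℝ, HasAtMostRows M →
      frobSq (Uhat - C) ≤ frobSq (Uhat - M)) :
    ∃ O : Matrix (Fin r) (Fin r) ℝ, Oᵀ * O = 1 ∧
      (∀ i : Fin n,
        Real.sqrt (∑ k, (C i k - (ν * O) (z i) k) ^ 2) < 1 / Real.sqrt (2 * (mMax z : ℝ)) →
        ∀ j : Fin n, z j ≠ z i →
          Real.sqrt (∑ k, (C i k - (ν * O) (z i) k) ^ 2) <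
            Real.sqrt (∑ k, (C i k - (ν * O) (z j) k) ^ 2)) ∧
      ((Finset.univ.filter fun i : Fin n =>
          1 / Real.sqrt (2 * (mMax z : ℝ)) ≤
            Real.sqrt (∑ k, (C i k - (ν * O) (z i) k) ^ 2)).card : ℝ) ≤
        64 * (mMax z : ℝ) * frobSq (Xhat - groundTruth z) := by
  obtain ⟨O, hO, hbound⟩ := exists_orthogonal_frobSq_sub_Zmat_mul_le hz hXhat hUhat hU hCopt
  have hm : (0 : ℝ) < mMax z :=
    Nat.cast_pos.mpr <| (clusterSize_pos hz 0).trans_le (clusterSize_le_mMax z 0)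
  refine ⟨O, hO, fun i hi j hj => ?_, ?_⟩
  · have hsep := two_div_sqrt_le_sqrt_sum_sub_sq hz hU.1 hO hj.symm
    simp only [sqrt_sum_sub_sq_eq_dist] at hi hsep ⊢
    exact dist_lt_dist_of_two_mul_le_dist hi hsep
  · have hcount := card_filter_mul_sq_le_frobSq (δ := 1 / √(2 * (mMax z : ℝ)))
      (by positivity) (C - Zmat z * (ν * O))
    simp only [Matrix.sub_apply, Zmat_mul_apply] at hcount
    rw [div_pow, one_pow, Real.sq_sqrt (by positivity), mul_one_div,
      div_le_iff₀ (mul_pos two_pos hm)] at hcount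
    nlinarith [frobSq_nonneg (Xhat - groundTruth z)]

/-- Let `X̂` be symmetric with top-`r` eigenvectors `Û`, let `U = Zν` be the
top-`r` eigenvectors of `X₀`, and let `C` (with rows `c_i`) minimize the k-means objective on
the rows of `Û`.  Then there is an orthogonal `O` such that every node `i` with
`‖c_i − Z_iνO‖ < 1/√(2 m_max)` is correctly clustered, and the number of nodes with
`‖c_i − Z_iνO‖ ≥ 1/√(2 m_max)` is at most `64 m_max ‖X̂ − X₀‖_F²`. -/
theorem spectral_kmeans_miscluster_bound {n r : ℕ} [NeZero r] (z : Fin n → Fin r)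
    (hz : Function.Surjective z)
    (Xhat : Matrix (Fin n) (Fin n) ℝ) (hXhat : Xhat.IsSymm)
    (Uhat : Matrix (Fin n) (Fin r) ℝ) (hUhat : IsTopEigenvectors Xhat Uhat)
    (ν : Matrix (Fin r) (Fin r) ℝ)
    (hU : IsTopEigenvectors (groundTruth z) (Zmat z * ν))
    (C : Matrix (Fin n) (Fin r) ℝ) (hCrows : HasAtMostRows C)
    (hCopt : ∀ M : Matrix (Fin n) (Fin r) ℝ, HasAtMostRows M →
      frobSq (Uhat - C) ≤ frobSq (Uhat - M)) :
    ∃ O : Matrix (Fin r) (Fin r) ℝ, Oᵀ * O = 1 ∧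
      (∀ i : Fin n,
        Real.sqrt (∑ k, (C i k - (ν * O) (z i) k) ^ 2) < 1 / Real.sqrt (2 * (mMax z : ℝ)) →
        ∀ j : Fin n, z j ≠ z i →
          Real.sqrt (∑ k, (C i k - (ν * O) (z i) k) ^ 2) <
            Real.sqrt (∑ k, (C i k - (ν * O) (z j) k) ^ 2)) ∧
      ((Finset.univ.filter fun i : Fin n =>
          1 / Real.sqrt (2 * (mMax z : ℝ)) ≤
            Real.sqrt (∑ k, (C i k - (ν * O) (z i) k) ^ 2)).card : ℝ) ≤
        64 * (mMax z : ℝ) * frobSq (Xhat - groundTruth z) :=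
  spectral_kmeans_miscluster_bound_general z hz Xhat hXhat Uhat hUhat ν hU C hCopt
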